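/- Define f(v₁, v₂) = 64 v₁² v₂² (2 − v₁² − v₂²) / ( π² sqrt( (1 − v₁²)(1 − v₂²) ) ) for 0 < v₁ < v₂ < 1, and for v₂ ∈ (0,1) define the conditional expectation g(v₂) = ( ∫_0^{v₂} v₁ · f(v₁, v₂) dv₁ ) / ( ∫_0^{v₂} f(v₁, v₂) dv₁ ). Then g(v₂) = (3/4) v₂ + O(v₂⁵) as v₂ → 0⁺; that is, there exist constants C > 0 and δ > 0 such that |g(v₂) − (3/4) v₂| ≤ C v₂⁵ for all 0 < v₂ < δ. -/

import Mathlib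

open Real

/-- The joint probability density of the time-of-flight speeds `(V₁, V₂)` of the two
excitations of the XY chain started in the state `|{1,2}⟩` of the `N₃ = 2` subspace. -/
noncomputable def jointSpeedDensity (v₁ v₂ : ℝ) : ℝ :=
  64 * v₁ ^ 2 * v₂ ^ 2 * (2 - v₁ ^ 2 - v₂ ^ 2) /
    (π ^ 2 * Real.sqrt ((1 - v₁ ^ 2) * (1 - v₂ ^ 2)))

/-- The conditional expectation `E(V₁ | V₂ = v₂)` of the speed of the leftmost particle
given that of the rightmost one. -/
noncomputable def condExpSpeed (v₂ : ℝ) : ℝ :=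
  (∫ v₁ in (0:ℝ)..v₂, v₁ * jointSpeedDensity v₁ v₂) /
    (∫ v₁ in (0:ℝ)..v₂, jointSpeedDensity v₁ v₂)

/-!
On `[0, v₂]` the density is, up to a factor depending only on `v₂`, the weight
`v₁² (2 - v₁² - v₂²) / √(1 - v₁²)`, which differs from `(2 - v₂²) v₁²` by `O(v₂⁶)`.
The weight `v₁²` on `[0, v₂]` has mean exactly `3 v₂ / 4`, so the error in the mean is
`v₂ · O(v₂⁶) · v₂` divided by the total mass `≳ v₂³`, i.e. `O(v₂⁵)`.
-/

open MeasureTheory Set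

noncomputable def weightedMean (a b : ℝ) (w : ℝ → ℝ) : ℝ :=
  (∫ x in a..b, x * w x) / ∫ x in a..b, w x

theorem weightedMean_const_mul (a b : ℝ) (w : ℝ → ℝ) {c : ℝ} (hc : c ≠ 0) :
    weightedMean a b (fun x => c * w x) = weightedMean a b w := by
  simp only [weightedMean, mul_left_comm _ c, intervalIntegral.integral_const_mul]
  exact mul_div_mul_left _ _ hc

theorem weightedMean_congr {a b : ℝ} {w w' : ℝ → ℝ} (h : EqOn w w' (uIcc a b)) :
    weightedMean a b w = weightedMean a b w' := by
  unfold weightedMean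
  rw [intervalIntegral.integral_congr h,
    intervalIntegral.integral_congr fun x hx => congrArg (x * ·) (h hx)]

theorem abs_weightedMean_sub_le {a b m R ε D : ℝ} {w w' : ℝ → ℝ} (hab : a ≤ b)
    (hw : IntervalIntegrable w volume a b) (hw' : IntervalIntegrable w' volume a b)
    (hw'_mean : ∫ x in a..b, (x - m) * w' x = 0)
    (hR : ∀ x ∈ Ioc a b, |x - m| ≤ R) (hε : ∀ x ∈ Ioc a b, |w x - w' x| ≤ ε)
    (hD : 0 < D) (hD_le : D ≤ ∫ x in a..b, w x) :
    |weightedMean a b w - m| ≤ R * ε * (b - a) / D := by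
  have hmass : 0 < ∫ x in a..b, w x := hD.trans_le hD_le
  have hcentred (v : ℝ → ℝ) (hv : IntervalIntegrable v volume a b) :
      IntervalIntegrable (fun x => (x - m) * v x) volume a b :=
    hv.continuousOn_mul (by fun_prop)
  have hnum : (∫ x in a..b, x * w x) - m * ∫ x in a..b, w x
      = ∫ x in a..b, (x - m) * (w x - w' x) := by
    have hfirst : ∫ x in a..b, (x - m) * w x
        = (∫ x in a..b, x * w x) - m * ∫ x in a..b, w x := by
      simp only [sub_mul]
      have hxw : IntervalIntegrable (fun x => x * w x) volume a b :=
        hw.continuousOn_mul continuousOn_id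
      rw [intervalIntegral.integral_sub hxw (hw.const_mul m),
        intervalIntegral.integral_const_mul]
    simp only [mul_sub]
    rw [intervalIntegral.integral_sub (hcentred w hw) (hcentred w' hw'), hw'_mean, sub_zero,
      hfirst]
  have hbound : |∫ x in a..b, (x - m) * (w x - w' x)| ≤ R * ε * (b - a) := by
    have := intervalIntegral.norm_integral_le_of_norm_le_const (a := a) (b := b)
      (f := fun x => (x - m) * (w x - w' x)) (C := R * ε) fun x hx => by
        rw [uIoc_of_le hab] at hx
        rw [norm_mul, Real.norm_eq_abs, Real.norm_eq_abs]
        exact mul_le_mul (hR x hx) (hε x hx) (abs_nonneg _) ((abs_nonneg _).trans (hR x hx))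
    rwa [Real.norm_eq_abs, abs_of_nonneg (sub_nonneg.2 hab)] at this
  calc |weightedMean a b w - m|
      = |∫ x in a..b, (x - m) * (w x - w' x)| / ∫ x in a..b, w x := by
        rw [weightedMean, div_sub' hmass.ne', ← hnum, abs_div, abs_of_pos hmass, mul_comm]
    _ ≤ R * ε * (b - a) / D :=
        div_le_div₀ ((abs_nonneg _).trans hbound) hbound hD hD_le

theorem integral_sub_three_quarters_mul_sq (a k : ℝ) :
    ∫ x in (0:ℝ)..a, (x - 3 / 4 * a) * (k * x ^ 2) = 0 := by
  have hpoly : ∀ x : ℝ, (x - 3 / 4 * a) * (k * x ^ 2) = k * x ^ 3 - 3 / 4 * a * k * x ^ 2 :=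
    fun x => by ring
  simp only [hpoly]
  rw [intervalIntegral.integral_sub ((continuous_pow 3).intervalIntegrable _ _ |>.const_mul _)
      ((continuous_pow 2).intervalIntegrable _ _ |>.const_mul _),
    intervalIntegral.integral_const_mul, intervalIntegral.integral_const_mul,
    integral_pow, integral_pow]
  ring

noncomputable def reducedSpeedDensity (v₂ v₁ : ℝ) : ℝ :=
  v₁ ^ 2 * (2 - v₁ ^ 2 - v₂ ^ 2) / √(1 - v₁ ^ 2)

theorem jointSpeedDensity_eq_mul {v₁ : ℝ} (v₂ : ℝ) (hv₁ : v₁ ^ 2 ≤ 1) :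
    jointSpeedDensity v₁ v₂
      = 64 * v₂ ^ 2 / (π ^ 2 * √(1 - v₂ ^ 2)) * reducedSpeedDensity v₂ v₁ := by
  rw [jointSpeedDensity, reducedSpeedDensity, Real.sqrt_mul (by linarith)]
  ring

theorem condExpSpeed_eq_weightedMean {v₂ : ℝ} (h0 : 0 < v₂) (h1 : v₂ < 1) :
    condExpSpeed v₂ = weightedMean 0 v₂ (reducedSpeedDensity v₂) := by
  have hc : 64 * v₂ ^ 2 / (π ^ 2 * √(1 - v₂ ^ 2)) ≠ 0 := by
    have : 0 < 1 - v₂ ^ 2 := by nlinarith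
    positivity
  rw [← weightedMean_const_mul _ _ _ hc]
  refine weightedMean_congr fun x hx => jointSpeedDensity_eq_mul v₂ ?_
  rw [uIcc_of_le h0.le] at hx
  nlinarith [hx.1, hx.2]

theorem continuousOn_reducedSpeedDensity (v₂ : ℝ) :
    ContinuousOn (reducedSpeedDensity v₂) (Ioo (-1) 1) := by
  refine ContinuousOn.div (by fun_prop) (by fun_prop) fun x hx => ?_
  have : 0 < 1 - x ^ 2 := by nlinarith [hx.1, hx.2]
  positivity

theorem intervalIntegrable_reducedSpeedDensity {v₂ : ℝ} (h0 : 0 ≤ v₂) (h1 : v₂ < 1) :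
    IntervalIntegrable (reducedSpeedDensity v₂) volume 0 v₂ :=
  ((continuousOn_reducedSpeedDensity v₂).mono
    (Icc_subset_Ioo (by norm_num) h1)).intervalIntegrable_of_Icc h0

theorem sq_le_reducedSpeedDensity {v₁ v₂ : ℝ} (h1 : v₁ ^ 2 < 1) (h2 : v₁ ^ 2 + v₂ ^ 2 ≤ 1) :
    v₁ ^ 2 ≤ reducedSpeedDensity v₂ v₁ := by
  have hs : 0 < √(1 - v₁ ^ 2) := Real.sqrt_pos.2 (by linarith)
  have hs1 : √(1 - v₁ ^ 2) ≤ 1 := Real.sqrt_le_one.2 (by linarith [sq_nonneg v₁])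
  rw [reducedSpeedDensity, le_div_iff₀ hs]
  nlinarith [sq_nonneg v₁, mul_le_mul_of_nonneg_left hs1 (sq_nonneg v₁)]

theorem abs_reducedSpeedDensity_sub_le {v₁ v₂ : ℝ} (h12 : v₁ ^ 2 ≤ v₂ ^ 2)
    (h2 : v₂ ^ 2 ≤ 1 / 4) :
    |reducedSpeedDensity v₂ v₁ - (2 - v₂ ^ 2) * v₁ ^ 2| ≤ 3 * v₂ ^ 6 := by
  set t := √(1 - v₁ ^ 2) with ht
  have ht_sq : t ^ 2 = 1 - v₁ ^ 2 := Real.sq_sqrt (by linarith)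
  have ht0 : 0 ≤ t := Real.sqrt_nonneg _
  have ht1 : t ≤ 1 := Real.sqrt_le_one.2 (by linarith [sq_nonneg v₁])
  -- `1 - t ≤ 1 - t²` since `t ≤ 1`, and `t ≥ 3/4` since `t² ≥ 3/4`
  have hgap : 1 - t ≤ v₁ ^ 2 := by nlinarith
  have ht34 : 3 / 4 ≤ t := by nlinarith
  have hdiff : reducedSpeedDensity v₂ v₁ - (2 - v₂ ^ 2) * v₁ ^ 2
      = v₁ ^ 2 * (1 - t) * (1 - t - v₂ ^ 2) / t := by
    rw [reducedSpeedDensity, ← ht]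
    field_simp
    linear_combination (-v₁ ^ 2) * ht_sq
  have hfactor : |1 - t - v₂ ^ 2| ≤ 2 * v₂ ^ 2 := abs_le.2 ⟨by nlinarith, by nlinarith⟩
  have hnum : v₁ ^ 2 * (1 - t) * |1 - t - v₂ ^ 2| ≤ v₂ ^ 2 * v₂ ^ 2 * (2 * v₂ ^ 2) :=
    mul_le_mul (mul_le_mul h12 (hgap.trans h12) (by linarith) (sq_nonneg _)) hfactor
      (abs_nonneg _) (by positivity)
  rw [hdiff, abs_div, abs_mul, abs_mul, abs_of_nonneg (sq_nonneg v₁),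
    abs_of_nonneg (sub_nonneg.2 ht1), abs_of_nonneg ht0, div_le_iff₀ (by linarith)]
  nlinarith [pow_nonneg (sq_nonneg v₂) 3]

theorem integral_reducedSpeedDensity_ge {v₂ : ℝ} (h0 : 0 ≤ v₂) (h1 : v₂ ≤ 1 / 2) :
    v₂ ^ 3 / 3 ≤ ∫ x in (0:ℝ)..v₂, reducedSpeedDensity v₂ x := by
  calc v₂ ^ 3 / 3 = ∫ x in (0:ℝ)..v₂, x ^ 2 := by rw [integral_pow]; norm_num
    _ ≤ ∫ x in (0:ℝ)..v₂, reducedSpeedDensity v₂ x :=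
        intervalIntegral.integral_mono_on h0 ((continuous_pow 2).intervalIntegrable _ _)
          (intervalIntegrable_reducedSpeedDensity h0 (by linarith)) fun x hx =>
            sq_le_reducedSpeedDensity (by nlinarith [hx.1, hx.2]) (by nlinarith [hx.1, hx.2])

/-- `E(V₁ | V₂) = (3/4) V₂ + O(V₂⁵)` as `V₂ → 0⁺`: there are constants `C > 0` and `δ > 0`
such that `|E(V₁ | V₂ = v₂) − (3/4) v₂| ≤ C v₂⁵` for all `0 < v₂ < δ`. -/
theorem condExpSpeed_asymptotics :
    ∃ C > (0 : ℝ), ∃ δ > (0 : ℝ), ∀ v₂ : ℝ, 0 < v₂ → v₂ < δ →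
      |condExpSpeed v₂ - (3 / 4) * v₂| ≤ C * v₂ ^ 5 := by
  refine ⟨9, by norm_num, 1 / 2, by norm_num, fun v₂ h0 h1 => ?_⟩
  rw [condExpSpeed_eq_weightedMean h0 (by linarith)]
  calc |weightedMean 0 v₂ (reducedSpeedDensity v₂) - 3 / 4 * v₂|
      ≤ v₂ * (3 * v₂ ^ 6) * (v₂ - 0) / (v₂ ^ 3 / 3) :=
        abs_weightedMean_sub_le (w' := fun x => (2 - v₂ ^ 2) * x ^ 2) h0.le
          (intervalIntegrable_reducedSpeedDensity h0.le (by linarith))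
          ((continuous_pow 2).intervalIntegrable _ _ |>.const_mul _)
          (integral_sub_three_quarters_mul_sq v₂ _)
          (fun x hx => abs_le.2 ⟨by linarith [hx.1], by linarith [hx.2]⟩)
          (fun x hx => abs_reducedSpeedDensity_sub_le (by nlinarith [hx.1, hx.2]) (by nlinarith))
          (by positivity) (integral_reducedSpeedDensity_ge h0.le h1.le)
    _ = 9 * v₂ ^ 5 := by field_simp; ring
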